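/- arXiv:1507.07799 — 3 statements merged into one kernel-verified Lean document; each statement's English description precedes it below -/
import Mathlib

section
/- Let I ⊆ ℝ be an open interval, k ∈ ℕ, and t ∈ ℝ. Let p : I → ℝ be differentiable, let η₁ < η₂ < ⋯ < η_k be real constants, let c₁ < c₂ < ⋯ < c_k be real constants, and set ξ₀(θ) := p(θ), ξ_i(θ) := c_i + θ for i = 1,…,k, and η_{k+1} := t. Assume ξ₀(θ) < η₁ < ξ₁(θ) < η₂ < ⋯ < ξ_k(θ) < η_{k+1} for all θ ∈ I. For i = 1,…,k+1 let h_i : ℝ × I → ℝ be continuously differentiable, and for i = 1,…,k let g_i : ℝ → ℝ be continuous. Define f : ℝ × I → ℝ by f(τ,θ) := h_i(τ,θ) for ξ_{i−1}(θ) ≤ τ < η_i (the 'green' intervals) and f(τ,θ) := g_i(τ) for η_i ≤ τ < ξ_i(θ) (the 'red' intervals), and assume f is continuous across each η_i, i.e. h_i(η_i,θ) = g_i(η_i) for all θ ∈ I. Then x(θ) := ∫_{p(θ)}^{t} f(τ,θ) dτ is differentiable on I, and x′(θ) = −h₁(p(θ),θ)·p′(θ) + Σ_{i=1}^{k} ( g_i(ξ_i(θ))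 − h_{i+1}(ξ_i(θ),θ) ) + Σ_{i=1}^{k+1} ∫_{ξ_{i−1}(θ)}^{η_i} (∂h_i/∂θ)(τ,θ) dτ. -/
/-!
Cut `[p(θ), t]` at the breakpoints. On a red piece the integrand does not depend on `θ`, which
enters only through the upper limit `ξ_i(θ) = c_i + θ`, so the fundamental theorem of calculus
gives `g_i(ξ_i(θ))`. A green piece `∫_{a(θ)}^{b} H(τ, θ) dτ` is handled by the Leibniz rule
with a moving lower limit: subtracting `∫_{a(θ₀)}^{a(θ)} H(τ, θ) dτ` leaves fixed limits, where
the derivative passes under the integral sign, and by joint continuity of `H` the subtracted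
integral is `H(a(θ₀), θ₀) (a(θ) - a(θ₀)) + o(a(θ) - a(θ₀))`.
-/

open MeasureTheory intervalIntegral Set Filter Topology Asymptotics Function

theorem intervalIntegrable_and_integral_eq_of_eqOn_Ioo {u v : ℝ → ℝ} {a b : ℝ} (hab : a ≤ b)
    (huv : EqOn u v (Ioo a b)) (hv : IntervalIntegrable v volume a b) :
    IntervalIntegrable u volume a b ∧ ∫ τ in a..b, u τ = ∫ τ in a..b, v τ := by
  rw [← uIoo_of_le hab] at huv
  exact ⟨hv.congr_uIoo huv.symm, integral_congr_uIoo huv⟩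

theorem integral_eq_add_sum_of_interleaved {u : ℝ → ℝ} {x y : ℕ → ℝ} (n : ℕ)
    (hxy : ∀ i ≤ n, IntervalIntegrable u volume (x i) (y (i + 1)))
    (hyx : ∀ i ∈ Finset.Icc 1 n, IntervalIntegrable u volume (y i) (x i)) :
    ∫ τ in x 0..y (n + 1), u τ = (∫ τ in x 0..y 1, u τ) +
      ∑ i ∈ Finset.Icc 1 n, ((∫ τ in y i..x i, u τ) + ∫ τ in x i..y (i + 1), u τ) := by
  suffices IntervalIntegrable u volume (x 0) (y (n + 1)) ∧ _ from this.2
  induction n with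
  | zero => exact ⟨hxy 0 le_rfl, by simp⟩
  | succ n ih =>
    obtain ⟨hint, heq⟩ := ih (fun i hi => hxy i (by omega))
      (fun i hi => hyx i (Finset.Icc_subset_Icc_right n.le_succ hi))
    have hred := hyx (n + 1) (by simp)
    have hgreen := hxy (n + 1) le_rfl
    refine ⟨(hint.trans hred).trans hgreen, ?_⟩
    rw [← integral_add_adjacent_intervals (hint.trans hred) hgreen,
      ← integral_add_adjacent_intervals hint hred, heq, Finset.sum_Icc_succ_top (by omega)]
    ring

theorem integral_eq_add_sum_of_piecewise {u : ℝ → ℝ} {x y : ℕ → ℝ} {G R : ℕ → ℝ → ℝ} (n : ℕ)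
    (hxy : ∀ i ≤ n, x i ≤ y (i + 1)) (hyx : ∀ i, 1 ≤ i → i ≤ n → y i ≤ x i)
    (huG : ∀ i ≤ n, EqOn u (G i) (Ioo (x i) (y (i + 1))))
    (huR : ∀ i, 1 ≤ i → i ≤ n → EqOn u (R i) (Ioo (y i) (x i)))
    (hG : ∀ i ≤ n, IntervalIntegrable (G i) volume (x i) (y (i + 1)))
    (hR : ∀ i, 1 ≤ i → i ≤ n → IntervalIntegrable (R i) volume (y i) (x i)) :
    ∫ τ in x 0..y (n + 1), u τ = (∫ τ in x 0..y 1, G 0 τ) +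
      ∑ i ∈ Finset.Icc 1 n, ((∫ τ in y i..x i, R i τ) + ∫ τ in x i..y (i + 1), G i τ) := by
  have hG' := fun i hi =>
    intervalIntegrable_and_integral_eq_of_eqOn_Ioo (hxy i hi) (huG i hi) (hG i hi)
  have hR' := fun i hi₁ hin =>
    intervalIntegrable_and_integral_eq_of_eqOn_Ioo (hyx i hi₁ hin) (huR i hi₁ hin) (hR i hi₁ hin)
  rw [integral_eq_add_sum_of_interleaved n (fun i hi => (hG' i hi).1)
    (fun i hi => (hR' i (Finset.mem_Icc.1 hi).1 (Finset.mem_Icc.1 hi).2).1), (hG' 0 n.zero_le).2]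
  refine congrArg _ (Finset.sum_congr rfl fun i hi => ?_)
  obtain ⟨hi₁, hin⟩ := Finset.mem_Icc.1 hi
  rw [(hR' i hi₁ hin).2, (hG' i hin).2]

section Leibniz

variable {H : ℝ → ℝ → ℝ} {U : Set ℝ} {θ₀ : ℝ}

theorem hasDerivAt_fderiv_apply_of_contDiffOn (hU : IsOpen U)
    (hH : ContDiffOn ℝ 1 (uncurry H) (univ ×ˢ U)) {θ : ℝ} (hθ : θ ∈ U) (τ : ℝ) :
    HasDerivAt (H τ) (fderiv ℝ (uncurry H) (τ, θ) (0, 1)) θ := by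
  have hdiff : DifferentiableAt ℝ (uncurry H) (τ, θ) :=
    (hH.differentiableOn one_ne_zero).differentiableAt
      ((isOpen_univ.prod hU).mem_nhds ⟨trivial, hθ⟩)
  exact hdiff.hasFDerivAt.comp_hasDerivAt θ ((hasDerivAt_const θ τ).prodMk (hasDerivAt_id θ))

theorem continuousOn_deriv_of_contDiffOn (hU : IsOpen U)
    (hH : ContDiffOn ℝ 1 (uncurry H) (univ ×ˢ U)) :
    ContinuousOn (uncurry fun τ θ => deriv (H τ) θ) (univ ×ˢ U) :=
  ((hH.continuousOn_fderiv_of_isOpen (isOpen_univ.prod hU) le_rfl).clm_apply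
    continuousOn_const).congr
    fun q hq => (hasDerivAt_fderiv_apply_of_contDiffOn hU hH hq.2 q.1).deriv

theorem hasDerivAt_integral_of_contDiffOn (hU : IsOpen U)
    (hH : ContDiffOn ℝ 1 (uncurry H) (univ ×ˢ U)) (hθ₀ : θ₀ ∈ U) (a b : ℝ) :
    HasDerivAt (fun θ => ∫ τ in a..b, H τ θ) (∫ τ in a..b, deriv (H τ) θ₀) θ₀ := by
  obtain ⟨ε, hε, hball⟩ := Metric.nhds_basis_closedBall.mem_iff.1 (hU.mem_nhds hθ₀)
  have hD := continuousOn_deriv_of_contDiffOn hU hH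
  obtain ⟨M, hM⟩ := (isCompact_uIcc.prod (isCompact_closedBall θ₀ ε)).exists_bound_of_continuousOn
    (hD.mono fun q hq => ⟨trivial, hball hq.2⟩)
  have hslice : ∀ θ ∈ U, Continuous fun τ => H τ θ := fun θ hθ =>
    continuousOn_univ.1 (hH.continuousOn.uncurry_right θ hθ)
  refine (intervalIntegral.hasDerivAt_integral_of_dominated_loc_of_deriv_le
    (F' := fun θ τ => deriv (H τ) θ) (bound := fun _ => M) (Metric.ball_mem_nhds θ₀ hε) ?_
    ((hslice θ₀ hθ₀).intervalIntegrable _ _)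
    (continuousOn_univ.1 (hD.uncurry_right θ₀ hθ₀)).aestronglyMeasurable ?_
    intervalIntegrable_const ?_).2
  · filter_upwards [hU.mem_nhds hθ₀] with θ hθ
    exact (hslice θ hθ).aestronglyMeasurable
  · exact .of_forall fun τ hτ θ hθ =>
      hM (τ, θ) ⟨uIoc_subset_uIcc hτ, Metric.ball_subset_closedBall hθ⟩
  · exact .of_forall fun τ _ θ hθ =>
      (hasDerivAt_fderiv_apply_of_contDiffOn hU hH
        (hball (Metric.ball_subset_closedBall hθ)) τ).differentiableAt.hasDerivAt

theorem isLittleO_integral_sub_of_continuousAt {a : ℝ → ℝ} (ha : ContinuousAt a θ₀)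
    (hH : ContinuousAt (uncurry H) (a θ₀, θ₀)) :
    (fun θ => ∫ τ in a θ₀..a θ, (H τ θ - H (a θ₀) θ₀)) =o[𝓝 θ₀] fun θ => a θ - a θ₀ := by
  refine isLittleO_iff.2 fun ε hε => ?_
  obtain ⟨δ, hδ, hnear⟩ := Metric.eventually_nhds_iff_ball.1
    (Metric.tendsto_nhds.1 hH ε hε)
  filter_upwards [Metric.ball_mem_nhds θ₀ hδ, ha (Metric.ball_mem_nhds (a θ₀) hδ)] with θ hθ haθ
  refine (intervalIntegral.norm_integral_le_of_norm_le_const fun τ hτ => ?_).trans_eq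
    (by rw [Real.norm_eq_abs])
  have hτ : dist τ (a θ₀) < δ := (abs_sub_left_of_mem_uIcc (uIoc_subset_uIcc hτ)).trans_lt haθ
  exact (hnear (τ, θ) (by simpa [Prod.dist_eq] using ⟨hτ, hθ⟩)).le

theorem hasDerivAt_integral_of_continuousAt_uncurry {a : ℝ → ℝ} {a' : ℝ}
    (ha : HasDerivAt a a' θ₀)
    (hH : ContinuousAt (uncurry H) (a θ₀, θ₀))
    (hint : ∀ᶠ θ in 𝓝 θ₀, IntervalIntegrable (fun τ => H τ θ) volume (a θ₀) (a θ)) :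
    HasDerivAt (fun θ => ∫ τ in a θ₀..a θ, H τ θ) (H (a θ₀) θ₀ * a') θ₀ := by
  set c := H (a θ₀) θ₀
  have hsplit : (fun θ => ∫ τ in a θ₀..a θ, (H τ θ - c))
      + (fun θ => c * (a θ - a θ₀ - (θ - θ₀) * a')) =ᶠ[𝓝 θ₀]
      fun θ => (∫ τ in a θ₀..a θ, H τ θ) - (∫ τ in a θ₀..a θ₀, H τ θ₀) - (θ - θ₀) • (c * a') := by
    filter_upwards [hint] with θ hθ
    simp only [Pi.add_apply, integral_same, smul_eq_mul, integral_sub hθ intervalIntegrable_const,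
      intervalIntegral.integral_const]
    ring
  rw [hasDerivAt_iff_isLittleO]
  refine (IsLittleO.add ?_ ?_).congr' hsplit EventuallyEq.rfl
  · exact (isLittleO_integral_sub_of_continuousAt ha.continuousAt hH).trans_isBigO ha.isBigO_sub
  · simpa only [smul_eq_mul] using (hasDerivAt_iff_isLittleO.1 ha).const_mul_left c

theorem hasDerivAt_integral_of_contDiffOn_of_hasDerivAt (hU : IsOpen U)
    (hH : ContDiffOn ℝ 1 (uncurry H) (univ ×ˢ U)) (hθ₀ : θ₀ ∈ U) {a : ℝ → ℝ} {a' : ℝ}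
    (ha : HasDerivAt a a' θ₀) (b : ℝ) :
    HasDerivAt (fun θ => ∫ τ in a θ..b, H τ θ)
      (-(H (a θ₀) θ₀ * a') + ∫ τ in a θ₀..b, deriv (H τ) θ₀) θ₀ := by
  have hslice : ∀ θ ∈ U, Continuous fun τ => H τ θ := fun θ hθ =>
    continuousOn_univ.1 (hH.continuousOn.uncurry_right θ hθ)
  have hsplit : (fun θ => (∫ τ in a θ₀..b, H τ θ) - ∫ τ in a θ₀..a θ, H τ θ)
      =ᶠ[𝓝 θ₀] fun θ => ∫ τ in a θ..b, H τ θ := by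
    filter_upwards [hU.mem_nhds hθ₀] with θ hθ
    exact integral_interval_sub_left ((hslice θ hθ).intervalIntegrable _ _)
      ((hslice θ hθ).intervalIntegrable _ _)
  have hmoving := hasDerivAt_integral_of_continuousAt_uncurry ha
    (hH.continuousOn.continuousAt ((isOpen_univ.prod hU).mem_nhds ⟨trivial, hθ₀⟩))
    (eventually_of_mem (hU.mem_nhds hθ₀) fun θ hθ => (hslice θ hθ).intervalIntegrable _ _)
  exact (((hasDerivAt_integral_of_contDiffOn hU hH hθ₀ _ b).sub hmoving).congr_of_eventuallyEq
    hsplit.symm).congr_deriv (by ring)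

end Leibniz

theorem traffic_lemma1_general
    (k : ℕ) (t A B : ℝ)
    (p p' : ℝ → ℝ) (η c : ℕ → ℝ) (ξ : ℕ → ℝ → ℝ)
    (h : ℕ → ℝ → ℝ → ℝ) (g : ℕ → ℝ → ℝ) (f : ℝ → ℝ → ℝ)
    (hp : ∀ θ ∈ Set.Ioo A B, HasDerivAt p (p' θ) θ)
    (hξ0 : ∀ θ : ℝ, ξ 0 θ = p θ)
    (hξc : ∀ i : ℕ, 1 ≤ i → i ≤ k → ∀ θ : ℝ, ξ i θ = c i + θ)
    (hηlast : η (k + 1) = t)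
    (horder₁ : ∀ θ ∈ Set.Ioo A B, ∀ i ≤ k, ξ i θ < η (i + 1))
    (horder₂ : ∀ θ ∈ Set.Ioo A B, ∀ i : ℕ, 1 ≤ i → i ≤ k → η i < ξ i θ)
    (hhC1 : ∀ i : ℕ, 1 ≤ i → i ≤ k + 1 →
      ContDiffOn ℝ 1 (fun q : ℝ × ℝ => h i q.1 q.2) (Set.univ ×ˢ Set.Ioo A B))
    (hg : ∀ i : ℕ, 1 ≤ i → i ≤ k → Continuous (g i))
    (hfgreen : ∀ θ ∈ Set.Ioo A B, ∀ i : ℕ, 1 ≤ i → i ≤ k + 1 → ∀ τ : ℝ,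
      ξ (i - 1) θ ≤ τ → τ < η i → f τ θ = h i τ θ)
    (hfred : ∀ θ ∈ Set.Ioo A B, ∀ i : ℕ, 1 ≤ i → i ≤ k → ∀ τ : ℝ,
      η i ≤ τ → τ < ξ i θ → f τ θ = g i τ) :
    ∀ θ ∈ Set.Ioo A B,
      HasDerivAt (fun θ' => ∫ τ in (p θ')..t, f τ θ')
        (-(h 1 (p θ) θ * p' θ)
          + ∑ i ∈ Finset.Icc 1 k, (g i (ξ i θ) - h (i + 1) (ξ i θ) θ)
          + ∑ i ∈ Finset.Icc 1 (k + 1),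
              ∫ τ in (ξ (i - 1) θ)..(η i), deriv (fun θ'' => h i τ θ'') θ)
        θ := by
  intro θ₀ hθ₀
  have hsplit : (fun θ => ∫ τ in p θ..t, f τ θ) =ᶠ[𝓝 θ₀] fun θ =>
      (∫ τ in p θ..η 1, h 1 τ θ) + ∑ i ∈ Finset.Icc 1 k,
        ((∫ τ in η i..ξ i θ, g i τ) + ∫ τ in ξ i θ..η (i + 1), h (i + 1) τ θ) := by
    filter_upwards [isOpen_Ioo.mem_nhds hθ₀] with θ hθ
    rw [← hξ0, ← hηlast]
    exact integral_eq_add_sum_of_piecewise (x := (ξ · θ)) (G := fun i τ => h (i + 1) τ θ) k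
      (fun i hi => (horder₁ θ hθ i hi).le) (fun i hi₁ hik => (horder₂ θ hθ i hi₁ hik).le)
      (fun i hi τ hτ => hfgreen θ hθ (i + 1) (by omega) (by omega) τ hτ.1.le hτ.2)
      (fun i hi₁ hik τ hτ => hfred θ hθ i hi₁ hik τ hτ.1.le hτ.2)
      (fun i hi => (continuousOn_univ.1 (ContinuousOn.uncurry_right (f := h (i + 1)) θ hθ
        (hhC1 (i + 1) (by omega) (by omega)).continuousOn)).intervalIntegrable _ _)
      (fun i hi₁ hik => (hg i hi₁ hik).intervalIntegrable _ _)
  have hfirst : HasDerivAt (fun θ => ∫ τ in p θ..η 1, h 1 τ θ)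
      (-(h 1 (p θ₀) θ₀ * p' θ₀) + ∫ τ in p θ₀..η 1, deriv (h 1 τ) θ₀) θ₀ :=
    hasDerivAt_integral_of_contDiffOn_of_hasDerivAt isOpen_Ioo (hhC1 1 le_rfl (by omega)) hθ₀
      (hp θ₀ hθ₀) _
  have hpair : ∀ i ∈ Finset.Icc 1 k,
      HasDerivAt (fun θ => (∫ τ in η i..ξ i θ, g i τ) + ∫ τ in ξ i θ..η (i + 1), h (i + 1) τ θ)
        (g i (ξ i θ₀) - h (i + 1) (ξ i θ₀) θ₀ +
          ∫ τ in ξ i θ₀..η (i + 1), deriv (h (i + 1) τ) θ₀) θ₀ := by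
    intro i hi
    obtain ⟨hi₁, hik⟩ := Finset.mem_Icc.1 hi
    have hξ : HasDerivAt (ξ i) 1 θ₀ := by
      rw [funext (hξc i hi₁ hik)]
      exact (hasDerivAt_id θ₀).const_add (c i)
    have hred := ((hg i hi₁ hik).integral_hasStrictDerivAt (η i) (ξ i θ₀)).hasDerivAt.comp θ₀ hξ
    have hgreen := hasDerivAt_integral_of_contDiffOn_of_hasDerivAt isOpen_Ioo
      (hhC1 (i + 1) (by omega) (by omega)) hθ₀ hξ (η (i + 1))
    exact (hred.add hgreen).congr_deriv (by ring)
  refine ((hfirst.add (HasDerivAt.fun_sum hpair)).congr_of_eventuallyEq hsplit).congr_deriv ?_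
  rw [← Finset.add_sum_Ioc_eq_sum_Icc (show 1 ≤ k + 1 by omega), ← Finset.Icc_add_one_left_eq_Ioc,
    ← Finset.map_add_right_Icc, Finset.sum_map, Finset.sum_add_distrib]
  simp only [Finset.sum_sub_distrib, tsub_self, hξ0, addRightEmbedding_apply, add_tsub_cancel_right]
  ring

/-- Lemma 1 of the paper, Eq. (17): with breakpoints
ξ₀(θ) = p(θ), ξ_i(θ) = c_i + θ (starts of green periods), η_i constant (starts
of red periods), η_{k+1} = t, interleaved as
ξ₀(θ) < η₁ < ξ₁(θ) < η₂ < ⋯ < ξ_k(θ) < η_{k+1}, the integrand f equal to the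
C¹ function h_i on the green intervals [ξ_{i−1}(θ), η_i) and to the continuous
(θ-independent) function g_i on the red intervals [η_i, ξ_i(θ)), continuous
across each η_i, the function x(θ) = ∫_{p(θ)}^{t} f(τ,θ) dτ is differentiable
on the open interval I = Ioo A B with
x′(θ) = −h₁(p(θ),θ)·p′(θ) + Σ_{i=1}^{k} ( g_i(ξ_i(θ)) − h_{i+1}(ξ_i(θ),θ) )
        + Σ_{i=1}^{k+1} ∫_{ξ_{i−1}(θ)}^{η_i} ∂h_i/∂θ(τ,θ) dτ. -/
theorem traffic_lemma1
    (k : ℕ) (t A B : ℝ)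
    (p p' : ℝ → ℝ) (η c : ℕ → ℝ) (ξ : ℕ → ℝ → ℝ)
    (h : ℕ → ℝ → ℝ → ℝ) (g : ℕ → ℝ → ℝ) (f : ℝ → ℝ → ℝ)
    (hp : ∀ θ ∈ Set.Ioo A B, HasDerivAt p (p' θ) θ)
    (hξ0 : ∀ θ : ℝ, ξ 0 θ = p θ)
    (hξc : ∀ i : ℕ, 1 ≤ i → i ≤ k → ∀ θ : ℝ, ξ i θ = c i + θ)
    (hηmono : ∀ i : ℕ, 1 ≤ i → i < k → η i < η (i + 1))
    (hcmono : ∀ i : ℕ, 1 ≤ i → i < k → c i < c (i + 1))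
    (hηlast : η (k + 1) = t)
    (horder₁ : ∀ θ ∈ Set.Ioo A B, ∀ i ≤ k, ξ i θ < η (i + 1))
    (horder₂ : ∀ θ ∈ Set.Ioo A B, ∀ i : ℕ, 1 ≤ i → i ≤ k → η i < ξ i θ)
    (hhC1 : ∀ i : ℕ, 1 ≤ i → i ≤ k + 1 →
      ContDiffOn ℝ 1 (fun q : ℝ × ℝ => h i q.1 q.2) (Set.univ ×ˢ Set.Ioo A B))
    (hg : ∀ i : ℕ, 1 ≤ i → i ≤ k → Continuous (g i))
    (hfgreen : ∀ θ ∈ Set.Ioo A B, ∀ i : ℕ, 1 ≤ i → i ≤ k + 1 → ∀ τ : ℝ,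
      ξ (i - 1) θ ≤ τ → τ < η i → f τ θ = h i τ θ)
    (hfred : ∀ θ ∈ Set.Ioo A B, ∀ i : ℕ, 1 ≤ i → i ≤ k → ∀ τ : ℝ,
      η i ≤ τ → τ < ξ i θ → f τ θ = g i τ)
    (hcont : ∀ θ ∈ Set.Ioo A B, ∀ i : ℕ, 1 ≤ i → i ≤ k → h i (η i) θ = g i (η i)) :
    ∀ θ ∈ Set.Ioo A B,
      HasDerivAt (fun θ' => ∫ τ in (p θ')..t, f τ θ')
        (-(h 1 (p θ) θ * p' θ)
          + ∑ i ∈ Finset.Icc 1 k, (g i (ξ i θ) - h (i + 1) (ξ i θ) θ)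
          + ∑ i ∈ Finset.Icc 1 (k + 1),
              ∫ τ in (ξ (i - 1) θ)..(η i), deriv (fun θ'' => h i τ θ'') θ)
        θ :=
  traffic_lemma1_general k t A B p p' η c ξ h g f hp hξ0 hξc hηlast horder₁ horder₂ hhC1 hg hfgreen
    hfred
end

section
/- Fix θ₀ ∈ ℝ and an open interval I ∋ θ₀, reals a < η, an integer m ≥ 2, constants φ, c ∈ ℝ, a continuously differentiable b : ℝ → ℝ, and continuous α₁, g : ℝ → ℝ. Let e₁,…,e_{m−1} and b₂,…,b_m be differentiable functions from I to ℝ with a < e₁(θ) < b₂(θ) < e₂(θ) < ⋯ < e_{m−1}(θ) < b_m(θ) < η for all θ ∈ I. Define f : ℝ × I → ℝ by f(τ,θ) := φ·b(τ − c − θ) + g(τ) on the 'busy' pieces [a, e₁(θ)), [b_j(θ), e_j(θ)) for j = 2,…,m−1, and [b_m(θ), η], and f(τ,θ) := φ·α₁(τ) + g(τ) on the 'empty' pieces [e_j(θ), b_{j+1}(θ)) for j = 1,…,m−1. Assume: (H1) for each j = 2,…,m−1 and all θ ∈ I, ∫_{b_j(θ)}^{e_j(θ)} ( α₁(τ) −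 b(τ − c − θ) ) dτ = 0; (H2) there exist differentiable ξ, X : I → ℝ with ξ(θ₀) = a and ∫_{ξ(θ)}^{e₁(θ)} ( α₁(τ) − b(τ − c − θ) ) dτ = −X(θ) for all θ ∈ I; (H3) for each j = 2,…,m, either b_j′(θ₀) = 0 or α₁(b_j(θ₀)) = b(b_j(θ₀) − c − θ₀). Then F(θ) := ∫_{a}^{η} f(τ,θ) dτ is differentiable at θ₀, and F′(θ₀) = φ·[ X′(θ₀) − ( α₁(a) − b(a − c − θ₀) )·ξ′(θ₀) + b(b_m(θ₀) − c − θ₀) − b(η − c − θ₀) ]. -/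
/-!
Subtracting the busy-period inflow `φ·b(τ − c − θ) + g` from `f` leaves `φ·(α₁ − b(· − c − θ))`
on the empty periods and `0` on the busy ones. By (H1) the net flow over each interior busy period
vanishes, so the empty periods together contribute `φ ∫_{e₁}^{b_m} (α₁ − b(· − c − θ))`, which by
(H2) equals `φ (X(θ) + ∫_{ξ}^{b_m} (α₁ − b(· − c − θ)))`. The resulting closed form only involves
integrals of continuous functions between differentiable limits (the shift by `θ` in `b(τ − c − θ)`
is moved into the limits), so it is differentiated by the fundamental theorem of calculus: the
interior breakpoints have disappeared, and the boundary term at `b_m` vanishes by (H3).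
-/

open MeasureTheory intervalIntegral Set

section PiecewiseIntegral

variable {r β D : ℝ → ℝ} {x y z : ℝ}

def HasSameIntervalIntegral (r β : ℝ → ℝ) (x y : ℝ) : Prop :=
  IntervalIntegrable r volume x y ∧ ∫ τ in x..y, r τ = ∫ τ in x..y, β τ

lemma HasSameIntervalIntegral.trans (hβ : Continuous β) (h₁ : HasSameIntervalIntegral r β x y)
    (h₂ : HasSameIntervalIntegral r β y z) : HasSameIntervalIntegral r β x z := by
  refine ⟨h₁.1.trans h₂.1, ?_⟩
  rw [← integral_add_adjacent_intervals h₁.1 h₂.1,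
    ← integral_add_adjacent_intervals (hβ.intervalIntegrable x y) (hβ.intervalIntegrable y z),
    h₁.2, h₂.2]

lemma hasSameIntervalIntegral_of_eqOn (hβ : Continuous β) (hxy : x ≤ y)
    (h : EqOn r β (Ioo x y)) : HasSameIntervalIntegral r β x y := by
  rw [← uIoo_of_le hxy] at h
  exact ⟨(intervalIntegrable_congr_uIoo h).2 (hβ.intervalIntegrable x y), integral_congr_uIoo h⟩

lemma HasSameIntervalIntegral.of_alternating {e b : ℕ → ℝ} {m : ℕ} (hm : 2 ≤ m)
    (hβ : Continuous β)
    (hgap : ∀ j, 1 ≤ j → j ≤ m - 1 → HasSameIntervalIntegral r β (e j) (b (j + 1)))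
    (hbusy : ∀ j, 2 ≤ j → j ≤ m - 1 → HasSameIntervalIntegral r β (b j) (e j)) :
    HasSameIntervalIntegral r β (e 1) (b m) := by
  have hchain : ∀ k, 1 ≤ k → k ≤ m - 1 → HasSameIntervalIntegral r β (e 1) (e k) := by
    intro k hk
    induction k, hk using Nat.le_induction with
    | base => exact fun _ => ⟨IntervalIntegrable.refl, by simp⟩
    | succ k hk ih =>
      exact fun hkm => ((ih (by omega)).trans hβ (hgap k hk (by omega))).trans hβ
        (hbusy (k + 1) (by omega) hkm)
  have hlast := hgap (m - 1) (by omega) le_rfl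
  rw [Nat.sub_add_cancel (by omega)] at hlast
  exact (hchain (m - 1) (by omega) le_rfl).trans hβ hlast

theorem integral_eq_add_integral_of_alternating {e b : ℕ → ℝ} {m : ℕ} {a η : ℝ} (hm : 2 ≤ m)
    (hβ : Continuous β) (hD : Continuous D)
    (ha : a ≤ e 1) (hgap_le : ∀ j, 1 ≤ j → j ≤ m - 1 → e j ≤ b (j + 1))
    (hbusy_le : ∀ j, 2 ≤ j → j ≤ m - 1 → b j ≤ e j) (hη : b m ≤ η)
    (hfirst : EqOn r β (Ioo a (e 1)))
    (hbusy : ∀ j, 2 ≤ j → j ≤ m - 1 → EqOn r β (Ioo (b j) (e j)))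
    (hlast : EqOn r β (Ioo (b m) η))
    (hgap : ∀ j, 1 ≤ j → j ≤ m - 1 → EqOn r (β + D) (Ioo (e j) (b (j + 1))))
    (hD_busy : ∀ j, 2 ≤ j → j ≤ m - 1 → ∫ τ in b j..e j, D τ = 0) :
    ∫ τ in a..η, r τ = (∫ τ in a..η, β τ) + ∫ τ in e 1..b m, D τ := by
  have hβD : Continuous (β + D) := hβ.add hD
  have hsplit : ∀ x y, ∫ τ in x..y, (β + D) τ = (∫ τ in x..y, β τ) + ∫ τ in x..y, D τ :=
    fun x y => integral_add (hβ.intervalIntegrable x y) (hD.intervalIntegrable x y)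
  have hmid : HasSameIntervalIntegral r (β + D) (e 1) (b m) := by
    refine .of_alternating hm hβD
      (fun j hj hj' => hasSameIntervalIntegral_of_eqOn hβD (hgap_le j hj hj') (hgap j hj hj'))
      (fun j hj hj' => ?_)
    obtain ⟨hint, heq⟩ :=
      hasSameIntervalIntegral_of_eqOn hβ (hbusy_le j hj hj') (hbusy j hj hj')
    exact ⟨hint, by rw [heq, hsplit, hD_busy j hj hj', add_zero]⟩
  obtain ⟨hint₁, heq₁⟩ := hasSameIntervalIntegral_of_eqOn hβ ha hfirst
  obtain ⟨hint₃, heq₃⟩ := hasSameIntervalIntegral_of_eqOn hβ hη hlast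
  rw [← integral_add_adjacent_intervals (hint₁.trans hmid.1) hint₃,
    ← integral_add_adjacent_intervals hint₁ hmid.1, heq₁, hmid.2, heq₃, hsplit,
    ← integral_add_adjacent_intervals (hβ.intervalIntegrable a (b m))
      (hβ.intervalIntegrable (b m) η),
    ← integral_add_adjacent_intervals (hβ.intervalIntegrable a (e 1))
      (hβ.intervalIntegrable (e 1) (b m))]
  ring

end PiecewiseIntegral

theorem integral_inflow_eq {f α₁ β₁ g : ℝ → ℝ} {e b : ℕ → ℝ} {m : ℕ} {a η φ ξ X : ℝ}
    (hm : 2 ≤ m) (hα₁ : Continuous α₁) (hβ₁ : Continuous β₁) (hg : Continuous g)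
    (ha : a ≤ e 1) (hgap_le : ∀ j, 1 ≤ j → j ≤ m - 1 → e j ≤ b (j + 1))
    (hbusy_le : ∀ j, 2 ≤ j → j ≤ m - 1 → b j ≤ e j) (hη : b m ≤ η)
    (hfirst : EqOn f (fun τ => φ * β₁ τ + g τ) (Ioo a (e 1)))
    (hbusy : ∀ j, 2 ≤ j → j ≤ m - 1 → EqOn f (fun τ => φ * β₁ τ + g τ) (Ioo (b j) (e j)))
    (hlast : EqOn f (fun τ => φ * β₁ τ + g τ) (Ioo (b m) η))
    (hgap : ∀ j, 1 ≤ j → j ≤ m - 1 → EqOn f (fun τ => φ * α₁ τ + g τ) (Ioo (e j) (b (j + 1))))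
    (hbusy_net : ∀ j, 2 ≤ j → j ≤ m - 1 → ∫ τ in b j..e j, (α₁ τ - β₁ τ) = 0)
    (hstart_net : ∫ τ in ξ..e 1, (α₁ τ - β₁ τ) = -X) :
    ∫ τ in a..η, f τ =
      (∫ τ in a..η, g τ) +
        φ * ((∫ τ in a..η, β₁ τ) + X + (∫ τ in ξ..b m, α₁ τ) - ∫ τ in ξ..b m, β₁ τ) := by
  have hnet : Continuous fun τ => α₁ τ - β₁ τ := hα₁.sub hβ₁
  have hpieces := integral_eq_add_integral_of_alternating (β := fun τ => φ * β₁ τ + g τ)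
    (D := fun τ => φ * (α₁ τ - β₁ τ)) hm (by fun_prop) (by fun_prop) ha hgap_le hbusy_le hη
    hfirst hbusy hlast
    (fun j hj hj' τ hτ => by rw [hgap j hj hj' hτ, Pi.add_apply]; ring)
    (fun j hj hj' => by rw [intervalIntegral.integral_const_mul, hbusy_net j hj hj', mul_zero])
  have hX : ∫ τ in e 1..b m, (α₁ τ - β₁ τ) = X + ∫ τ in ξ..b m, (α₁ τ - β₁ τ) := by
    rw [← integral_add_adjacent_intervals (hnet.intervalIntegrable ξ (e 1))
      (hnet.intervalIntegrable (e 1) (b m)), hstart_net]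
    ring
  rw [hpieces, integral_add ((hβ₁.intervalIntegrable a η).const_mul φ) (hg.intervalIntegrable a η),
    intervalIntegral.integral_const_mul, intervalIntegral.integral_const_mul, hX,
    integral_sub (hα₁.intervalIntegrable ξ (b m)) (hβ₁.intervalIntegrable ξ (b m))]
  ring

section IntegralWithMovingLimits

variable {h u v : ℝ → ℝ} {u' v' θ : ℝ}

theorem hasDerivAt_integral_of_continuous (hh : Continuous h) (hu : HasDerivAt u u' θ)
    (hv : HasDerivAt v v' θ) :
    HasDerivAt (fun θ => ∫ τ in u θ..v θ, h τ) (h (v θ) * v' - h (u θ) * u') θ := by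
  have hprim : ∀ x, HasDerivAt (fun x => ∫ τ in 0..x, h τ) (h x) x :=
    fun x => (hh.integral_hasStrictDerivAt 0 x).hasDerivAt
  have hdiff : (fun θ => ∫ τ in u θ..v θ, h τ) =
      fun θ => (∫ τ in 0..v θ, h τ) - ∫ τ in 0..u θ, h τ :=
    funext fun θ =>
      (integral_interval_sub_left (hh.intervalIntegrable _ _) (hh.intervalIntegrable _ _)).symm
  rw [hdiff]
  exact ((hprim (v θ)).comp θ hv).sub ((hprim (u θ)).comp θ hu)

theorem hasDerivAt_integral_comp_sub_sub (c : ℝ) (hh : Continuous h) (hu : HasDerivAt u u' θ)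
    (hv : HasDerivAt v v' θ) :
    HasDerivAt (fun θ => ∫ τ in u θ..v θ, h (τ - c - θ))
      (h (v θ - c - θ) * (v' - 1) - h (u θ - c - θ) * (u' - 1)) θ := by
  have hshift : (fun θ => ∫ τ in u θ..v θ, h (τ - c - θ)) =
      fun θ => ∫ τ in u θ - c - θ..v θ - c - θ, h τ := by
    funext θ
    simp only [sub_sub]
    exact integral_comp_sub_right h (c + θ)
  rw [hshift]
  exact hasDerivAt_integral_of_continuous hh ((hu.sub_const c).fun_sub (hasDerivAt_id' θ))
    ((hv.sub_const c).fun_sub (hasDerivAt_id' θ))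

end IntegralWithMovingLimits

theorem traffic_lemma2_part_IIi_general
    (A B θ₀ : ℝ) (hθ₀ : θ₀ ∈ Set.Ioo A B)
    (a η : ℝ) (m : ℕ) (hm : 2 ≤ m) (φ c : ℝ)
    (b : ℝ → ℝ) (hb : ContDiff ℝ 1 b)
    (α₁ g : ℝ → ℝ) (hα₁ : Continuous α₁) (hg : Continuous g)
    (ee bb bb' : ℕ → ℝ → ℝ)
    (hbbd : ∀ j : ℕ, 2 ≤ j → j ≤ m → ∀ θ ∈ Set.Ioo A B,
      HasDerivAt (bb j) (bb' j θ) θ)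
    (horder : ∀ θ ∈ Set.Ioo A B,
      a < ee 1 θ ∧
      (∀ j : ℕ, 1 ≤ j → j ≤ m - 1 → ee j θ < bb (j + 1) θ) ∧
      (∀ j : ℕ, 2 ≤ j → j ≤ m - 1 → bb j θ < ee j θ) ∧
      bb m θ < η)
    (f : ℝ → ℝ → ℝ)
    (hf₁ : ∀ θ ∈ Set.Ioo A B, ∀ τ : ℝ, a ≤ τ → τ < ee 1 θ →
      f τ θ = φ * b (τ - c - θ) + g τ)
    (hf₂ : ∀ θ ∈ Set.Ioo A B, ∀ j : ℕ, 2 ≤ j → j ≤ m - 1 → ∀ τ : ℝ,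
      bb j θ ≤ τ → τ < ee j θ → f τ θ = φ * b (τ - c - θ) + g τ)
    (hf₃ : ∀ θ ∈ Set.Ioo A B, ∀ τ : ℝ, bb m θ ≤ τ → τ ≤ η →
      f τ θ = φ * b (τ - c - θ) + g τ)
    (hf₄ : ∀ θ ∈ Set.Ioo A B, ∀ j : ℕ, 1 ≤ j → j ≤ m - 1 → ∀ τ : ℝ,
      ee j θ ≤ τ → τ < bb (j + 1) θ → f τ θ = φ * α₁ τ + g τ)
    (H1 : ∀ θ ∈ Set.Ioo A B, ∀ j : ℕ, 2 ≤ j → j ≤ m - 1 →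
      ∫ τ in (bb j θ)..(ee j θ), (α₁ τ - b (τ - c - θ)) = 0)
    (ξ X ξ' X' : ℝ → ℝ)
    (hξd : ∀ θ ∈ Set.Ioo A B, HasDerivAt ξ (ξ' θ) θ)
    (hXd : ∀ θ ∈ Set.Ioo A B, HasDerivAt X (X' θ) θ)
    (hξa : ξ θ₀ = a)
    (H2 : ∀ θ ∈ Set.Ioo A B,
      ∫ τ in (ξ θ)..(ee 1 θ), (α₁ τ - b (τ - c - θ)) = - X θ)
    (H3 : ∀ j : ℕ, 2 ≤ j → j ≤ m →
      bb' j θ₀ = 0 ∨ α₁ (bb j θ₀) = b (bb j θ₀ - c - θ₀)) :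
    HasDerivAt (fun θ => ∫ τ in a..η, f τ θ)
      (φ * (X' θ₀ - (α₁ a - b (a - c - θ₀)) * ξ' θ₀
            + b (bb m θ₀ - c - θ₀) - b (η - c - θ₀))) θ₀ := by
  have hbc : Continuous b := hb.continuous
  have hclosed : ∀ θ ∈ Set.Ioo A B, ∫ τ in a..η, f τ θ =
      (∫ τ in a..η, g τ) + φ * ((∫ τ in a..η, b (τ - c - θ)) + X θ
        + (∫ τ in ξ θ..bb m θ, α₁ τ) - ∫ τ in ξ θ..bb m θ, b (τ - c - θ)) := by
    intro θ hθ
    obtain ⟨hfirst, hgap, hbusy, hlast⟩ := horder θ hθ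
    exact integral_inflow_eq hm hα₁ (by fun_prop) hg hfirst.le
      (fun j hj hj' => (hgap j hj hj').le) (fun j hj hj' => (hbusy j hj hj').le) hlast.le
      (fun τ hτ => hf₁ θ hθ τ hτ.1.le hτ.2)
      (fun j hj hj' τ hτ => hf₂ θ hθ j hj hj' τ hτ.1.le hτ.2)
      (fun τ hτ => hf₃ θ hθ τ hτ.1.le hτ.2.le)
      (fun j hj hj' τ hτ => hf₄ θ hθ j hj hj' τ hτ.1.le hτ.2) (H1 θ hθ) (H2 θ hθ)
  have hbm := hbbd m hm le_rfl θ₀ hθ₀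
  have hξ := hξd θ₀ hθ₀
  have hderiv := (((((hasDerivAt_integral_comp_sub_sub c hbc (hasDerivAt_const θ₀ a)
    (hasDerivAt_const θ₀ η)).add (hXd θ₀ hθ₀)).add
    (hasDerivAt_integral_of_continuous hα₁ hξ hbm)).sub
    (hasDerivAt_integral_comp_sub_sub c hbc hξ hbm)).const_mul φ).const_add (∫ τ in a..η, g τ)
  have hbm_term : (α₁ (bb m θ₀) - b (bb m θ₀ - c - θ₀)) * bb' m θ₀ = 0 := by
    rcases H3 m hm le_rfl with h | h <;> simp [h]
  refine (hderiv.congr_of_eventuallyEq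
    (Filter.eventuallyEq_of_mem (isOpen_Ioo.mem_nhds hθ₀) hclosed)).congr_deriv ?_
  rw [hξa]
  linear_combination φ * hbm_term

/-- Lemma 2(II.i), Eq. (20): over a green period [a,η] of the
upstream light partitioned into q1-busy pieces [a, e₁(θ)), [b_j(θ), e_j(θ))
(j = 2,…,m−1), [b_m(θ), η] — on which f(τ,θ) = φ·b(τ−c−θ) + g(τ) — and q1-empty
pieces [e_j(θ), b_{j+1}(θ)) — on which f(τ,θ) = φ·α₁(τ) + g(τ) — with
(H1) each interior busy period integrating net flow to zero,
(H2) ∫_{ξ(θ)}^{e₁(θ)} (α₁ − b(·−c−θ)) = −X(θ) with ξ(θ₀) = a, and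
(H3) each busy-period start b_j satisfying b_j′(θ₀) = 0 or α₁(b_j(θ₀)) =
b(b_j(θ₀)−c−θ₀), the function F(θ) = ∫_a^η f(τ,θ) dτ is differentiable at θ₀
with F′(θ₀) = φ·[ X′(θ₀) − (α₁(a) − b(a−c−θ₀))·ξ′(θ₀)
                  + b(b_m(θ₀)−c−θ₀) − b(η−c−θ₀) ]. -/
theorem traffic_lemma2_part_IIi
    (A B θ₀ : ℝ) (hθ₀ : θ₀ ∈ Set.Ioo A B)
    (a η : ℝ) (haη : a < η) (m : ℕ) (hm : 2 ≤ m) (φ c : ℝ)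
    (b : ℝ → ℝ) (hb : ContDiff ℝ 1 b)
    (α₁ g : ℝ → ℝ) (hα₁ : Continuous α₁) (hg : Continuous g)
    (ee bb ee' bb' : ℕ → ℝ → ℝ)
    (heed : ∀ j : ℕ, 1 ≤ j → j ≤ m - 1 → ∀ θ ∈ Set.Ioo A B,
      HasDerivAt (ee j) (ee' j θ) θ)
    (hbbd : ∀ j : ℕ, 2 ≤ j → j ≤ m → ∀ θ ∈ Set.Ioo A B,
      HasDerivAt (bb j) (bb' j θ) θ)
    (horder : ∀ θ ∈ Set.Ioo A B,
      a < ee 1 θ ∧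
      (∀ j : ℕ, 1 ≤ j → j ≤ m - 1 → ee j θ < bb (j + 1) θ) ∧
      (∀ j : ℕ, 2 ≤ j → j ≤ m - 1 → bb j θ < ee j θ) ∧
      bb m θ < η)
    (f : ℝ → ℝ → ℝ)
    (hf₁ : ∀ θ ∈ Set.Ioo A B, ∀ τ : ℝ, a ≤ τ → τ < ee 1 θ →
      f τ θ = φ * b (τ - c - θ) + g τ)
    (hf₂ : ∀ θ ∈ Set.Ioo A B, ∀ j : ℕ, 2 ≤ j → j ≤ m - 1 → ∀ τ : ℝ,
      bb j θ ≤ τ → τ < ee j θ → f τ θ = φ * b (τ - c - θ) + g τ)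
    (hf₃ : ∀ θ ∈ Set.Ioo A B, ∀ τ : ℝ, bb m θ ≤ τ → τ ≤ η →
      f τ θ = φ * b (τ - c - θ) + g τ)
    (hf₄ : ∀ θ ∈ Set.Ioo A B, ∀ j : ℕ, 1 ≤ j → j ≤ m - 1 → ∀ τ : ℝ,
      ee j θ ≤ τ → τ < bb (j + 1) θ → f τ θ = φ * α₁ τ + g τ)
    (H1 : ∀ θ ∈ Set.Ioo A B, ∀ j : ℕ, 2 ≤ j → j ≤ m - 1 →
      ∫ τ in (bb j θ)..(ee j θ), (α₁ τ - b (τ - c - θ)) = 0)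
    (ξ X ξ' X' : ℝ → ℝ)
    (hξd : ∀ θ ∈ Set.Ioo A B, HasDerivAt ξ (ξ' θ) θ)
    (hXd : ∀ θ ∈ Set.Ioo A B, HasDerivAt X (X' θ) θ)
    (hξa : ξ θ₀ = a)
    (H2 : ∀ θ ∈ Set.Ioo A B,
      ∫ τ in (ξ θ)..(ee 1 θ), (α₁ τ - b (τ - c - θ)) = - X θ)
    (H3 : ∀ j : ℕ, 2 ≤ j → j ≤ m →
      bb' j θ₀ = 0 ∨ α₁ (bb j θ₀) = b (bb j θ₀ - c - θ₀)) :
    HasDerivAt (fun θ => ∫ τ in a..η, f τ θ)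
      (φ * (X' θ₀ - (α₁ a - b (a - c - θ₀)) * ξ' θ₀
            + b (bb m θ₀ - c - θ₀) - b (η - c - θ₀))) θ₀ :=
  traffic_lemma2_part_IIi_general A B θ₀ hθ₀ a η m hm φ c b hb α₁ g hα₁ hg ee bb bb' hbbd horder f
    hf₁ hf₂ hf₃ hf₄ H1 ξ X ξ' X' hξd hXd hξa H2 H3
end

section
/- Fix θ₀ ∈ ℝ and an open interval I ∋ θ₀, reals a < η, an integer m ≥ 1, constants φ, c ∈ ℝ, a continuously differentiable b : ℝ → ℝ, and continuous α₁, g : ℝ → ℝ. Let b₁,…,b_m and e₁,…,e_{m−1} be differentiable functions from I to ℝ with a < b₁(θ) < e₁(θ) < b₂(θ) < ⋯ < e_{m−1}(θ) < b_m(θ) < η for all θ ∈ I. Define f : ℝ × I → ℝ by f(τ,θ) := φ·b(τ − c − θ) + g(τ) on the 'busy' pieces [b_j(θ), e_j(θ)) for j = 1,…,m−1 and [b_m(θ), η], and f(τ,θ) := φ·α₁(τ) + g(τ) on the 'empty' pieces [a, b₁(θ)) and [e_j(θ), b_{j+1}(θ)) for j = 1,…,m−1. Assume: (H1) for each j = 1,…,m−1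 and all θ ∈ I, ∫_{b_j(θ)}^{e_j(θ)} ( α₁(τ) − b(τ − c − θ) ) dτ = 0; (H3) for each j = 1,…,m, either b_j′(θ₀) = 0 or α₁(b_j(θ₀)) = b(b_j(θ₀) − c − θ₀). Then F(θ) := ∫_{a}^{η} f(τ,θ) dτ is differentiable at θ₀, and F′(θ₀) = φ·( b(b_m(θ₀) − c − θ₀) − b(η − c − θ₀) ). -/
/-!
By (H1), every complete busy period `[b_j, e_j)` carries the same integral under the busy rate
`φ b(· - c - θ) + g` as under the empty rate `φ α₁ + g`. Hence, for `θ` near `θ₀`,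
`F θ = ∫_a^{b_m θ} (φ α₁ + g) + φ ∫_{b_m θ - c - θ}^{η - c - θ} b + ∫_{b_m θ}^η g`,
in which the break points `b_j` (`j < m`) and `e_j` no longer appear. Differentiating, the two
terms proportional to `b_m'(θ₀)` cancel by (H3), leaving `φ (b(b_m θ₀ - c - θ₀) - b(η - c - θ₀))`.
-/

open MeasureTheory Set intervalIntegral

theorem Continuous.hasDerivAt_integral_of_hasDerivAt {E : Type*} [NormedAddCommGroup E]
    [NormedSpace ℝ E] [CompleteSpace E] {h : ℝ → E} {u v : ℝ → ℝ} {u' v' x : ℝ}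
    (hh : Continuous h) (hu : HasDerivAt u u' x) (hv : HasDerivAt v v' x) :
    HasDerivAt (fun y => ∫ t in u y..v y, h t) (v' • h (v x) - u' • h (u x)) x := by
  have hP : ∀ z, HasDerivAt (fun w => ∫ t in (0 : ℝ)..w, h t) (h z) z := fun z =>
    (hh.integral_hasStrictDerivAt 0 z).hasDerivAt
  have hdiff : (fun y => ∫ t in u y..v y, h t) =
      fun y => (∫ t in (0 : ℝ)..v y, h t) - ∫ t in (0 : ℝ)..u y, h t := by
    funext y
    exact (integral_interval_sub_left (hh.intervalIntegrable _ _) (hh.intervalIntegrable _ _)).symm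
  rw [hdiff]
  exact ((hP _).scomp x hv).sub ((hP _).scomp x hu)

theorem integral_mul_add_eq_of_integral_sub_eq_zero {u v w : ℝ → ℝ} {x y : ℝ} (φ : ℝ)
    (hu : IntervalIntegrable u volume x y) (hv : IntervalIntegrable v volume x y)
    (hw : IntervalIntegrable w volume x y) (h : ∫ τ in x..y, (u τ - v τ) = 0) :
    ∫ τ in x..y, (φ * v τ + w τ) = ∫ τ in x..y, (φ * u τ + w τ) := by
  rw [integral_sub hu hv, sub_eq_zero] at h
  rw [integral_add (hv.const_mul φ) hw, integral_add (hu.const_mul φ) hw,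
    intervalIntegral.integral_const_mul, intervalIntegral.integral_const_mul, h]

theorem integral_mul_comp_sub_add {b g : ℝ → ℝ} (hb : Continuous b) (hg : Continuous g)
    (φ d x y : ℝ) :
    ∫ τ in x..y, (φ * b (τ - d) + g τ) = φ * (∫ τ in x - d..y - d, b τ) + ∫ τ in x..y, g τ := by
  have hshift : Continuous fun τ => b (τ - d) := by fun_prop
  rw [integral_add ((hshift.intervalIntegrable _ _).const_mul φ)
      (hg.intervalIntegrable _ _), intervalIntegral.integral_const_mul,
    integral_comp_sub_right]

theorem intervalIntegrable_and_integral_eq_of_eqOn_Ioo_s7 {f h : ℝ → ℝ} {x y : ℝ} (hxy : x ≤ y)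
    (hh : IntervalIntegrable h volume x y) (hfh : EqOn f h (Ioo x y)) :
    IntervalIntegrable f volume x y ∧ ∫ τ in x..y, f τ = ∫ τ in x..y, h τ :=
  ⟨(intervalIntegrable_congr_uIoo (uIoo_of_le hxy ▸ hfh)).mpr hh,
    integral_congr_Ioo_of_le hxy hfh⟩

section BusyPeriods

variable {f p q : ℝ → ℝ} {a : ℝ} {m : ℕ} {s e : ℕ → ℝ}

theorem integral_eq_of_busy_periods (hp : Continuous p) (hq : Continuous q)
    (ha : a ≤ s 1) (hse : ∀ j, 1 ≤ j → j < m → s j ≤ e j ∧ e j ≤ s (j + 1))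
    (hf_first : EqOn f p (Ioo a (s 1)))
    (hf_busy : ∀ j, 1 ≤ j → j < m → EqOn f q (Ioo (s j) (e j)))
    (hf_empty : ∀ j, 1 ≤ j → j < m → EqOn f p (Ioo (e j) (s (j + 1))))
    (hbusy : ∀ j, 1 ≤ j → j < m → ∫ τ in s j..e j, q τ = ∫ τ in s j..e j, p τ) :
    ∀ j, 1 ≤ j → j ≤ m →
      IntervalIntegrable f volume a (s j) ∧ ∫ τ in a..s j, f τ = ∫ τ in a..s j, p τ := by
  intro j hj
  induction j, hj using Nat.le_induction with
  | base =>
    exact fun _ => intervalIntegrable_and_integral_eq_of_eqOn_Ioo_s7 ha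
      (hp.intervalIntegrable _ _) hf_first
  | succ j hj ih =>
    intro hjm
    obtain ⟨hse₁, hse₂⟩ := hse j hj hjm
    obtain ⟨hia, hea⟩ := ih (Nat.le_of_succ_le hjm)
    obtain ⟨hib, heb⟩ := intervalIntegrable_and_integral_eq_of_eqOn_Ioo_s7 hse₁
      (hq.intervalIntegrable _ _) (hf_busy j hj hjm)
    obtain ⟨hie, hee⟩ := intervalIntegrable_and_integral_eq_of_eqOn_Ioo_s7 hse₂
      (hp.intervalIntegrable _ _) (hf_empty j hj hjm)
    refine ⟨(hia.trans hib).trans hie, ?_⟩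
    rw [← integral_add_adjacent_intervals (hia.trans hib) hie,
      ← integral_add_adjacent_intervals hia hib, hea, heb, hbusy j hj hjm, hee,
      integral_add_adjacent_intervals (hp.intervalIntegrable _ _) (hp.intervalIntegrable _ _),
      integral_add_adjacent_intervals (hp.intervalIntegrable _ _) (hp.intervalIntegrable _ _)]

theorem integral_eq_add_of_busy_periods {η : ℝ} (hp : Continuous p) (hq : Continuous q)
    (hm : 1 ≤ m) (ha : a ≤ s 1) (hse : ∀ j, 1 ≤ j → j < m → s j ≤ e j ∧ e j ≤ s (j + 1))
    (hη : s m ≤ η)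
    (hf_first : EqOn f p (Ioo a (s 1)))
    (hf_busy : ∀ j, 1 ≤ j → j < m → EqOn f q (Ioo (s j) (e j)))
    (hf_empty : ∀ j, 1 ≤ j → j < m → EqOn f p (Ioo (e j) (s (j + 1))))
    (hf_last : EqOn f q (Ioo (s m) η))
    (hbusy : ∀ j, 1 ≤ j → j < m → ∫ τ in s j..e j, q τ = ∫ τ in s j..e j, p τ) :
    ∫ τ in a..η, f τ = (∫ τ in a..s m, p τ) + ∫ τ in s m..η, q τ := by
  obtain ⟨hia, hea⟩ := integral_eq_of_busy_periods hp hq ha hse hf_first hf_busy hf_empty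
    hbusy m hm le_rfl
  obtain ⟨hil, hel⟩ := intervalIntegrable_and_integral_eq_of_eqOn_Ioo_s7 hη
    (hq.intervalIntegrable _ _) hf_last
  rw [← integral_add_adjacent_intervals hia hil, hea, hel]

end BusyPeriods

theorem traffic_lemma2_part_IIii_general
    (A B θ₀ : ℝ) (hθ₀ : θ₀ ∈ Set.Ioo A B)
    (a η : ℝ) (m : ℕ) (hm : 1 ≤ m) (φ c : ℝ)
    (b : ℝ → ℝ) (hb : ContDiff ℝ 1 b)
    (α₁ g : ℝ → ℝ) (hα₁ : Continuous α₁) (hg : Continuous g)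
    (bb ee bb' : ℕ → ℝ → ℝ)
    (hbbd : ∀ j : ℕ, 1 ≤ j → j ≤ m → ∀ θ ∈ Set.Ioo A B,
      HasDerivAt (bb j) (bb' j θ) θ)
    (horder : ∀ θ ∈ Set.Ioo A B,
      a < bb 1 θ ∧
      (∀ j : ℕ, 1 ≤ j → j ≤ m - 1 → bb j θ < ee j θ ∧ ee j θ < bb (j + 1) θ) ∧
      bb m θ < η)
    (f : ℝ → ℝ → ℝ)
    (hf₁ : ∀ θ ∈ Set.Ioo A B, ∀ j : ℕ, 1 ≤ j → j ≤ m - 1 → ∀ τ : ℝ,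
      bb j θ ≤ τ → τ < ee j θ → f τ θ = φ * b (τ - c - θ) + g τ)
    (hf₂ : ∀ θ ∈ Set.Ioo A B, ∀ τ : ℝ, bb m θ ≤ τ → τ ≤ η →
      f τ θ = φ * b (τ - c - θ) + g τ)
    (hf₃ : ∀ θ ∈ Set.Ioo A B, ∀ τ : ℝ, a ≤ τ → τ < bb 1 θ →
      f τ θ = φ * α₁ τ + g τ)
    (hf₄ : ∀ θ ∈ Set.Ioo A B, ∀ j : ℕ, 1 ≤ j → j ≤ m - 1 → ∀ τ : ℝ,
      ee j θ ≤ τ → τ < bb (j + 1) θ → f τ θ = φ * α₁ τ + g τ)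
    (H1 : ∀ θ ∈ Set.Ioo A B, ∀ j : ℕ, 1 ≤ j → j ≤ m - 1 →
      ∫ τ in (bb j θ)..(ee j θ), (α₁ τ - b (τ - c - θ)) = 0)
    (H3 : ∀ j : ℕ, 1 ≤ j → j ≤ m →
      bb' j θ₀ = 0 ∨ α₁ (bb j θ₀) = b (bb j θ₀ - c - θ₀)) :
    HasDerivAt (fun θ => ∫ τ in a..η, f τ θ)
      (φ * (b (bb m θ₀ - c - θ₀) - b (η - c - θ₀))) θ₀ := by
  have hbc : Continuous b := hb.continuous
  set p : ℝ → ℝ := fun τ => φ * α₁ τ + g τ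
  have hp : Continuous p := by fun_prop
  have hbbm : HasDerivAt (bb m) (bb' m θ₀) θ₀ := hbbd m hm le_rfl θ₀ hθ₀
  have hF : ∀ θ ∈ Ioo A B, ∫ τ in a..η, f τ θ = (∫ τ in a..bb m θ, p τ) +
      φ * (∫ τ in bb m θ - (c + θ)..η - (c + θ), b τ) + ∫ τ in bb m θ..η, g τ := by
    intro θ hθ
    obtain ⟨ha, hse, hη⟩ := horder θ hθ
    have hshift : Continuous fun τ => b (τ - c - θ) := by fun_prop
    rw [integral_eq_add_of_busy_periods (q := fun τ => φ * b (τ - c - θ) + g τ)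
      (s := fun j => bb j θ) (e := fun j => ee j θ) hp (by fun_prop) hm ha.le
      (fun j hj hjm => (hse j hj (by omega)).imp le_of_lt le_of_lt) hη.le
      (fun τ hτ => hf₃ θ hθ τ hτ.1.le hτ.2)
      (fun j hj hjm τ hτ => hf₁ θ hθ j hj (by omega) τ hτ.1.le hτ.2)
      (fun j hj hjm τ hτ => hf₄ θ hθ j hj (by omega) τ hτ.1.le hτ.2)
      (fun τ hτ => hf₂ θ hθ τ hτ.1.le hτ.2.le)
      (fun j hj hjm => integral_mul_add_eq_of_integral_sub_eq_zero φ (hα₁.intervalIntegrable _ _)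
        (hshift.intervalIntegrable _ _) (hg.intervalIntegrable _ _) (H1 θ hθ j hj (by omega)))]
    simp only [sub_sub, integral_mul_comp_sub_add hbc hg, add_assoc]
  have hG := ((hp.hasDerivAt_integral_of_hasDerivAt (hasDerivAt_const θ₀ a) hbbm).add
    ((hbc.hasDerivAt_integral_of_hasDerivAt (hbbm.sub ((hasDerivAt_id θ₀).const_add c))
      (((hasDerivAt_id θ₀).const_add c).const_sub η)).const_mul φ)).add
    (hg.hasDerivAt_integral_of_hasDerivAt hbbm (hasDerivAt_const θ₀ η))
  refine (hG.congr_of_eventuallyEq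
    (Filter.eventually_of_mem (isOpen_Ioo.mem_nhds hθ₀) hF)).congr_deriv ?_
  rcases H3 m hm le_rfl with h | h <;>
    simp only [p, h, smul_eq_mul, Pi.sub_apply, sub_sub, id] <;> ring

/-- Lemma 2(II.ii): over a green period [a,η] of the upstream
light whose left endpoint a lies in the interior of a q1-empty period, with
q1-busy pieces [b_j(θ), e_j(θ)) (j = 1,…,m−1) and [b_m(θ), η] — on which
f(τ,θ) = φ·b(τ−c−θ) + g(τ) — and q1-empty pieces [a, b₁(θ)) and
[e_j(θ), b_{j+1}(θ)) — on which f(τ,θ) = φ·α₁(τ) + g(τ) — assuming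
(H1) each complete busy period integrates net flow to zero, and
(H3) each busy-period start b_j satisfies b_j′(θ₀) = 0 or
α₁(b_j(θ₀)) = b(b_j(θ₀)−c−θ₀), the function F(θ) = ∫_a^η f(τ,θ) dτ is
differentiable at θ₀ with F′(θ₀) = φ·( b(b_m(θ₀)−c−θ₀) − b(η−c−θ₀) ). -/
theorem traffic_lemma2_part_IIii
    (A B θ₀ : ℝ) (hθ₀ : θ₀ ∈ Set.Ioo A B)
    (a η : ℝ) (haη : a < η) (m : ℕ) (hm : 1 ≤ m) (φ c : ℝ)
    (b : ℝ → ℝ) (hb : ContDiff ℝ 1 b)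
    (α₁ g : ℝ → ℝ) (hα₁ : Continuous α₁) (hg : Continuous g)
    (bb ee bb' ee' : ℕ → ℝ → ℝ)
    (hbbd : ∀ j : ℕ, 1 ≤ j → j ≤ m → ∀ θ ∈ Set.Ioo A B,
      HasDerivAt (bb j) (bb' j θ) θ)
    (heed : ∀ j : ℕ, 1 ≤ j → j ≤ m - 1 → ∀ θ ∈ Set.Ioo A B,
      HasDerivAt (ee j) (ee' j θ) θ)
    (horder : ∀ θ ∈ Set.Ioo A B,
      a < bb 1 θ ∧
      (∀ j : ℕ, 1 ≤ j → j ≤ m - 1 → bb j θ < ee j θ ∧ ee j θ < bb (j + 1) θ) ∧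
      bb m θ < η)
    (f : ℝ → ℝ → ℝ)
    (hf₁ : ∀ θ ∈ Set.Ioo A B, ∀ j : ℕ, 1 ≤ j → j ≤ m - 1 → ∀ τ : ℝ,
      bb j θ ≤ τ → τ < ee j θ → f τ θ = φ * b (τ - c - θ) + g τ)
    (hf₂ : ∀ θ ∈ Set.Ioo A B, ∀ τ : ℝ, bb m θ ≤ τ → τ ≤ η →
      f τ θ = φ * b (τ - c - θ) + g τ)
    (hf₃ : ∀ θ ∈ Set.Ioo A B, ∀ τ : ℝ, a ≤ τ → τ < bb 1 θ →
      f τ θ = φ * α₁ τ + g τ)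
    (hf₄ : ∀ θ ∈ Set.Ioo A B, ∀ j : ℕ, 1 ≤ j → j ≤ m - 1 → ∀ τ : ℝ,
      ee j θ ≤ τ → τ < bb (j + 1) θ → f τ θ = φ * α₁ τ + g τ)
    (H1 : ∀ θ ∈ Set.Ioo A B, ∀ j : ℕ, 1 ≤ j → j ≤ m - 1 →
      ∫ τ in (bb j θ)..(ee j θ), (α₁ τ - b (τ - c - θ)) = 0)
    (H3 : ∀ j : ℕ, 1 ≤ j → j ≤ m →
      bb' j θ₀ = 0 ∨ α₁ (bb j θ₀) = b (bb j θ₀ - c - θ₀)) :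
    HasDerivAt (fun θ => ∫ τ in a..η, f τ θ)
      (φ * (b (bb m θ₀ - c - θ₀) - b (η - c - θ₀))) θ₀ :=
  traffic_lemma2_part_IIii_general A B θ₀ hθ₀ a η m hm φ c b hb α₁ g hα₁ hg bb ee bb' hbbd horder f
    hf₁ hf₂ hf₃ hf₄ H1 H3
end
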